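/- Fix t > 0 with t ≠ 2 and x ∈ ℝ. Then as n → ∞, n · (d/dx) Φ((c_n x + d_n)^{1/t}) = e^{−x} ( 1 + x b_n^{−2} (1 − t + ((t−2)/2) x) + x² b_n^{−4} ( (1−t)(1−2t)/2 + (5(1−t)(t−2)/6) x + ((t−2)²/8) x² ) + O(b_n^{−6}) ), where the derivative in x equals t^{−1} n c_n (c_n x + d_n)^{1/t − 1} φ((c_n x + d_n)^{1/t}) and is defined for n large enough that c_n x + d_n > 0. -/

import Mathlib

/-!
Write `ε = b_n⁻²` and `u = 1 + t x ε`. Then `c_n x + d_n = b_n^t u`, and the defining equation of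
`b_n` says `n = √(2π) b_n e^{b_n²/2}`, so `n e^x` times the derivative collapses to the function
`u^{1/t - 1} exp (x + (1 - u^{2/t}) / (2ε))` of `ε` alone. The cubic binomial expansion of
`(1 + v)^{2/t}` shows that the exponent is `(t-2)/2 x² ε + (1-t)(t-2)/3 x³ ε² + O(ε³)`;
expanding the exponential and multiplying by the quadratic expansion of `u^{1/t - 1}` gives the
stated polynomial up to `O(ε³)`, and `ε = b_n⁻² → 0` because `b_n → ∞`.
-/

open Real Filter Topology

noncomputable def stdNormalCDF (x : ℝ) : ℝ :=
  ∫ u in Set.Iic x, Real.exp (-u ^ 2 / 2) / Real.sqrt (2 * Real.pi)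

noncomputable def stdNormalPDF (x : ℝ) : ℝ :=
  Real.exp (-x ^ 2 / 2) / Real.sqrt (2 * Real.pi)

open Asymptotics MeasureTheory

lemma continuous_stdNormalPDF : Continuous stdNormalPDF := by
  unfold stdNormalPDF; fun_prop

lemma integrable_stdNormalPDF : Integrable stdNormalPDF := by
  refine ((integrable_exp_neg_mul_sq (b := 1 / 2) (by norm_num)).div_const
    (√(2 * π))).congr (.of_forall fun u => ?_)
  simp only [stdNormalPDF]; ring_nf

lemma hasDerivAt_stdNormalCDF (a : ℝ) : HasDerivAt stdNormalCDF (stdNormalPDF a) a := by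
  have hcdf : stdNormalCDF = fun y => stdNormalCDF 0 + ∫ u in (0 : ℝ)..y, stdNormalPDF u := by
    funext y
    rw [intervalIntegral.integral_Iic_sub_Iic integrable_stdNormalPDF.integrableOn
      integrable_stdNormalPDF.integrableOn |>.symm]
    simp only [stdNormalCDF, stdNormalPDF]
    ring
  rw [hcdf]
  exact ((continuous_stdNormalPDF.integral_hasStrictDerivAt 0 a).hasDerivAt.const_add _)

lemma hasDerivAt_stdNormalCDF_comp_rpow {c d r x : ℝ} (h : 0 < c * x + d) :
    HasDerivAt (fun y => stdNormalCDF ((c * y + d) ^ r))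
      (r * c * (c * x + d) ^ (r - 1) * stdNormalPDF ((c * x + d) ^ r)) x := by
  have hin : HasDerivAt (fun y => c * y + d) c x := by
    simpa using ((hasDerivAt_id x).const_mul c).add_const d
  exact ((hasDerivAt_stdNormalCDF _).comp x (hin.rpow_const (p := r) (Or.inl h.ne'))).congr_deriv
    (by ring)

/-- Punctured at `0`, because the functions expanded below contain `1 / ε`. -/
def HasQuadraticExpansion (f : ℝ → ℝ) (a₀ a₁ a₂ : ℝ) : Prop :=
  (fun ε => f ε - (a₀ + a₁ * ε + a₂ * ε ^ 2)) =O[𝓝[≠] 0] (· ^ 3)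

lemma hasQuadraticExpansion_const (c : ℝ) : HasQuadraticExpansion (fun _ => c) c 0 0 := by
  simpa [HasQuadraticExpansion] using isBigO_zero (fun ε : ℝ => ε ^ 3) (𝓝[≠] 0)

lemma hasQuadraticExpansion_id : HasQuadraticExpansion id 0 1 0 := by
  simpa [HasQuadraticExpansion] using isBigO_zero (fun ε : ℝ => ε ^ 3) (𝓝[≠] 0)

lemma Continuous.tendsto_nhdsNE_zero {k : ℝ → ℝ} (hk : Continuous k) {c : ℝ} (hc : k 0 = c) :
    Tendsto k (𝓝[≠] 0) (𝓝 c) :=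
  (hk.tendsto' 0 c hc).mono_left nhdsWithin_le_nhds

namespace HasQuadraticExpansion

variable {f g : ℝ → ℝ} {a₀ a₁ a₂ b₀ b₁ b₂ : ℝ}

lemma congr (hf : HasQuadraticExpansion f a₀ a₁ a₂) (hfg : f =ᶠ[𝓝[≠] 0] g) :
    HasQuadraticExpansion g a₀ a₁ a₂ :=
  IsBigO.congr' hf (hfg.mono fun ε h => by simp only [h]) EventuallyEq.rfl

lemma tendsto (hf : HasQuadraticExpansion f a₀ a₁ a₂) : Tendsto f (𝓝[≠] 0) (𝓝 a₀) := by
  have hp : Tendsto (fun ε : ℝ => a₀ + a₁ * ε + a₂ * ε ^ 2) (𝓝[≠] 0) (𝓝 a₀) :=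
    Continuous.tendsto_nhdsNE_zero (by fun_prop) (by simp)
  have hr : Tendsto (fun ε => f ε - (a₀ + a₁ * ε + a₂ * ε ^ 2)) (𝓝[≠] 0) (𝓝 0) :=
    IsBigO.trans_tendsto hf (Continuous.tendsto_nhdsNE_zero (by fun_prop) (by simp))
  simpa using hr.add hp

lemma add (hf : HasQuadraticExpansion f a₀ a₁ a₂) (hg : HasQuadraticExpansion g b₀ b₁ b₂) :
    HasQuadraticExpansion (fun ε => f ε + g ε) (a₀ + b₀) (a₁ + b₁) (a₂ + b₂) :=
  (IsBigO.add hf hg).congr_left fun ε => by ring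

lemma const_mul (hf : HasQuadraticExpansion f a₀ a₁ a₂) (c : ℝ) :
    HasQuadraticExpansion (fun ε => c * f ε) (c * a₀) (c * a₁) (c * a₂) :=
  (IsBigO.const_mul_left hf c).congr_left fun ε => by ring

lemma mul (hf : HasQuadraticExpansion f a₀ a₁ a₂) (hg : HasQuadraticExpansion g b₀ b₁ b₂) :
    HasQuadraticExpansion (fun ε => f ε * g ε)
      (a₀ * b₀) (a₀ * b₁ + a₁ * b₀) (a₀ * b₂ + a₁ * b₁ + a₂ * b₀) := by
  have hpf : Tendsto (fun ε : ℝ => a₀ + a₁ * ε + a₂ * ε ^ 2) (𝓝[≠] 0) (𝓝 a₀) :=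
    Continuous.tendsto_nhdsNE_zero (by fun_prop) (by simp)
  have hk : Tendsto (fun ε : ℝ => a₁ * b₂ + a₂ * b₁ + a₂ * b₂ * ε) (𝓝[≠] 0)
      (𝓝 (a₁ * b₂ + a₂ * b₁)) :=
    Continuous.tendsto_nhdsNE_zero (by fun_prop) (by simp)
  have h₁ := (IsBigO.mul hf (hg.tendsto.isBigO_one ℝ)).congr_right fun ε => mul_one _
  have h₂ := ((hpf.isBigO_one ℝ).mul hg).congr_right fun ε => one_mul _
  have h₃ := ((isBigO_refl (· ^ 3) _).mul (hk.isBigO_one ℝ)).congr_right fun ε => mul_one _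
  exact ((h₁.add h₂).add h₃).congr_left fun ε => by ring

lemma isBigO_id (hf : HasQuadraticExpansion f 0 a₁ a₂) : f =O[𝓝[≠] 0] id := by
  have hsq : Tendsto (fun ε : ℝ => ε ^ 2) (𝓝[≠] 0) (𝓝 0) :=
    Continuous.tendsto_nhdsNE_zero (by fun_prop) (by simp)
  have hlin : Tendsto (fun ε : ℝ => a₁ + a₂ * ε) (𝓝[≠] 0) (𝓝 a₁) :=
    Continuous.tendsto_nhdsNE_zero (by fun_prop) (by simp)
  have hcube : (fun ε : ℝ => ε ^ 3) =O[𝓝[≠] 0] id :=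
    ((isBigO_refl id _).mul (hsq.isBigO_one ℝ)).congr (fun ε => by rw [id]; ring) fun ε => mul_one _
  have hpoly := ((isBigO_refl id _).mul (hlin.isBigO_one ℝ)).congr_right fun ε => mul_one _
  exact ((IsBigO.trans hf hcube).add hpoly).congr_left fun ε => by rw [id]; ring

lemma exp (hf : HasQuadraticExpansion f 0 a₁ a₂) :
    HasQuadraticExpansion (fun ε => Real.exp (f ε)) 1 a₁ (a₂ + a₁ ^ 2 / 2) := by
  have hrem := ((Real.exp_sub_sum_range_isBigO_pow 3).comp_tendsto hf.tendsto).trans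
    (hf.isBigO_id.pow 3)
  have hpoly := ((hasQuadraticExpansion_const 1).add hf).add ((hf.mul hf).const_mul (1 / 2))
  refine (hrem.add hpoly).congr (fun ε => ?_) fun ε => rfl
  simp only [Function.comp_apply, Finset.sum_range_succ, Finset.sum_range_zero,
    Nat.factorial_zero, Nat.factorial_one, Nat.factorial_two, Nat.cast_one, Nat.cast_ofNat]
  ring

end HasQuadraticExpansion

lemma one_add_rpow_sub_cubic_isBigO (a : ℝ) :
    (fun v : ℝ => (1 + v) ^ a - (1 + a * v + a * (a - 1) / 2 * v ^ 2 +
      a * (a - 1) * (a - 2) / 6 * v ^ 3)) =O[𝓝 0] (· ^ 4) := by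
  refine (((Real.one_add_rpow_hasFPowerSeriesAt_zero (a := a)).isBigO_sub_partialSum_pow 4).congr
    (fun v => ?_) fun v => (abs_pow v 4).symm).of_abs_right
  simp only [FormalMultilinearSeries.partialSum, FormalMultilinearSeries.apply_eq_prod_smul_coeff,
    binomialSeries, FormalMultilinearSeries.coeff_ofScalars, Ring.choose_eq_smul,
    descPochhammer_succ_right, descPochhammer_zero, Polynomial.smeval_mul, Polynomial.smeval_sub,
    Polynomial.smeval_X, Polynomial.smeval_one, Polynomial.smeval_natCast, Finset.sum_range_succ,
    Finset.sum_range_zero, Finset.prod_const, Finset.card_univ, Fintype.card_fin, Nat.factorial,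
    Nat.succ_eq_add_one, smul_eq_mul, nsmul_eq_mul, zero_add]
  push_cast
  ring

lemma hasQuadraticExpansion_one_add_rpow_sub_one_div (a c : ℝ) :
    HasQuadraticExpansion (fun ε => ((1 + c * ε) ^ a - 1) / ε)
      (a * c) (a * (a - 1) / 2 * c ^ 2) (a * (a - 1) * (a - 2) / 6 * c ^ 3) := by
  have hc : Tendsto (fun ε : ℝ => c * ε) (𝓝[≠] 0) (𝓝 0) :=
    Continuous.tendsto_nhdsNE_zero (by fun_prop) (by simp)
  have hR := (((one_add_rpow_sub_cubic_isBigO a).comp_tendsto hc).trans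
    ((isBigO_refl (· ^ 4) _).const_mul_left (c ^ 4) |>.congr_left fun ε => by simp [mul_pow])).mul
    (isBigO_refl (fun ε : ℝ => ε⁻¹) _)
  refine hR.congr' (eventually_mem_nhdsWithin.mono fun ε (hε : ε ≠ 0) => ?_)
    (eventually_mem_nhdsWithin.mono fun ε (hε : ε ≠ 0) => ?_)
  · simp only [Function.comp_apply]
    field_simp
    ring
  · simp only
    field_simp

lemma hasQuadraticExpansion_one_add_rpow (a c : ℝ) :
    HasQuadraticExpansion (fun ε => (1 + c * ε) ^ a) 1 (a * c) (a * (a - 1) / 2 * c ^ 2) := by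
  have h := (hasQuadraticExpansion_const 1).add
    (hasQuadraticExpansion_id.mul (hasQuadraticExpansion_one_add_rpow_sub_one_div a c))
  simp only [zero_mul, zero_add, one_mul, add_zero, id] at h
  refine h.congr (eventually_mem_nhdsWithin.mono fun ε (hε : ε ≠ 0) => ?_)
  field_simp
  ring

/-- `n e^x` times the derivative of `Φ((c_n x + d_n)^{1/t})` at `x`, in terms of `ε = b_n⁻²`. -/
noncomputable def normalizedDensity (t x ε : ℝ) : ℝ :=
  (1 + t * x * ε) ^ (1 / t - 1) * exp (x + (1 - (1 + t * x * ε) ^ (2 / t)) / (2 * ε))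

lemma hasQuadraticExpansion_normalizedDensity {t : ℝ} (ht : t ≠ 0) (x : ℝ) :
    HasQuadraticExpansion (normalizedDensity t x) 1 (x * (1 - t + (t - 2) / 2 * x))
      (x ^ 2 * ((1 - t) * (1 - 2 * t) / 2 + 5 * (1 - t) * (t - 2) / 6 * x +
        (t - 2) ^ 2 / 8 * x ^ 2)) := by
  have hW : HasQuadraticExpansion (fun ε => x + (1 - (1 + t * x * ε) ^ (2 / t)) / (2 * ε))
      0 ((t - 2) / 2 * x ^ 2) ((1 - t) * (t - 2) / 3 * x ^ 3) := by
    have h := (hasQuadraticExpansion_const x).add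
      ((hasQuadraticExpansion_one_add_rpow_sub_one_div (2 / t) (t * x)).const_mul (-1 / 2))
    convert h.congr (g := fun ε => x + (1 - (1 + t * x * ε) ^ (2 / t)) / (2 * ε))
      (.of_eq (funext fun ε => by ring)) using 1 <;> field_simp <;> ring
  unfold normalizedDensity
  convert (hasQuadraticExpansion_one_add_rpow (1 / t - 1) (t * x)).mul hW.exp using 1 <;>
    field_simp <;> ring

lemma tendsto_atTop_of_sq_mul_exp_sq {b : ℕ → ℝ}
    (hb : ∀ n : ℕ, 1 ≤ n → 0 < b n ∧ 2 * π * b n ^ 2 * exp (b n ^ 2) = (n : ℝ) ^ 2) :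
    Tendsto b atTop atTop := by
  refine tendsto_atTop.2 fun M => ?_
  have hn : ∀ᶠ n : ℕ in atTop, 2 * π * M ^ 2 * exp (M ^ 2) < (n : ℝ) ^ 2 :=
    ((tendsto_pow_atTop two_ne_zero).comp tendsto_natCast_atTop_atTop).eventually_gt_atTop _
  filter_upwards [hn, eventually_ge_atTop 1] with n hn hn1
  obtain ⟨hb0, hbn⟩ := hb n hn1
  by_contra! hlt
  have hsq : b n ^ 2 ≤ M ^ 2 := pow_le_pow_left₀ hb0.le hlt.le 2
  have : 2 * π * b n ^ 2 * exp (b n ^ 2) ≤ 2 * π * M ^ 2 * exp (M ^ 2) := by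
    gcongr
  linarith

lemma eq_sqrt_mul_exp_of_sq_eq {B n : ℝ} (hB : 0 < B) (hn : 0 ≤ n)
    (hBn : 2 * π * B ^ 2 * exp (B ^ 2) = n ^ 2) : n = √(2 * π) * B * exp (B ^ 2 / 2) := by
  refine (pow_left_inj₀ hn (by positivity) two_ne_zero).1 ?_
  rw [← hBn, mul_pow, mul_pow, sq_sqrt (by positivity), ← exp_nat_mul]
  ring_nf

lemma mul_rpow_sub_two_mul_add_rpow {t x B : ℝ} (hB : 0 < B) :
    t * B ^ (t - 2) * x + B ^ t = B ^ t * (1 + t * x * (B ^ 2)⁻¹) := by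
  rw [rpow_sub hB, rpow_two]; field_simp; ring

lemma mul_exp_mul_density_eq_normalizedDensity {t x B n : ℝ} (ht : t ≠ 0) (hB : 0 < B)
    (hu : 0 < 1 + t * x * (B ^ 2)⁻¹) (hn : 0 ≤ n) (hBn : 2 * π * B ^ 2 * exp (B ^ 2) = n ^ 2) :
    n * exp x * (t⁻¹ * (t * B ^ (t - 2)) * (t * B ^ (t - 2) * x + B ^ t) ^ (1 / t - 1) *
      stdNormalPDF ((t * B ^ (t - 2) * x + B ^ t) ^ (1 / t))) =
        normalizedDensity t x (B ^ 2)⁻¹ := by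
  rw [normalizedDensity, mul_rpow_sub_two_mul_add_rpow hB]
  generalize 1 + t * x * (B ^ 2)⁻¹ = u at hu ⊢
  have hpow : (B ^ t * u) ^ (1 / t - 1) = B ^ (1 - t) * u ^ (1 / t - 1) := by
    rw [mul_rpow (by positivity) hu.le, ← rpow_mul hB.le]; congr 2; field_simp
  have hsq : ((B ^ t * u) ^ (1 / t)) ^ 2 = B ^ 2 * u ^ (2 / t) := by
    rw [mul_rpow (by positivity) hu.le, ← rpow_mul hB.le, mul_one_div_cancel ht, rpow_one,
      mul_pow, ← rpow_natCast (u ^ (1 / t)), ← rpow_mul hu.le]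
    ring_nf
  have hBB : B ^ (1 - t) = (B * B ^ (t - 2))⁻¹ := by
    rw [show 1 - t = -(1 + (t - 2)) by ring, rpow_neg hB.le, rpow_add hB, rpow_one]
  have hexp : exp (x + (1 - u ^ (2 / t)) / (2 * (B ^ 2)⁻¹)) =
      exp (B ^ 2 / 2) * exp x * exp (-(B ^ 2 * u ^ (2 / t)) / 2) := by
    rw [← exp_add, ← exp_add]; congr 1; field_simp; ring
  rw [hpow, stdNormalPDF, hsq, eq_sqrt_mul_exp_of_sq_eq hB hn hBn, hexp, hBB]
  field_simp

theorem powered_extremes_cdf_deriv_expansion_t_ne_two_general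
    (b : ℕ → ℝ)
    (hb : ∀ n : ℕ, 1 ≤ n → 0 < b n ∧
      2 * Real.pi * (b n) ^ 2 * Real.exp ((b n) ^ 2) = (n : ℝ) ^ 2)
    (t : ℝ) (ht : 0 < t) (x : ℝ)
    (c d : ℕ → ℝ)
    (hc : ∀ n : ℕ, c n = t * b n ^ (t - 2))
    (hd : ∀ n : ℕ, d n = b n ^ t) :
    ∃ C > (0 : ℝ), ∃ N : ℕ, ∀ n : ℕ, N ≤ n →
      0 < c n * x + d n ∧
      deriv (fun y : ℝ => stdNormalCDF ((c n * y + d n) ^ (1 / t))) x =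
        t⁻¹ * c n * (c n * x + d n) ^ (1 / t - 1) *
          stdNormalPDF ((c n * x + d n) ^ (1 / t)) ∧
      |(n : ℝ) * Real.exp x *
          deriv (fun y : ℝ => stdNormalCDF ((c n * y + d n) ^ (1 / t))) x -
        (1 + x / (b n) ^ 2 * (1 - t + (t - 2) / 2 * x) +
          x ^ 2 / (b n) ^ 4 *
            ((1 - t) * (1 - 2 * t) / 2 + 5 * (1 - t) * (t - 2) / 6 * x +
              (t - 2) ^ 2 / 8 * x ^ 2))|
      ≤ C / (b n) ^ 6 := by
  obtain rfl : c = fun n => t * b n ^ (t - 2) := funext hc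
  obtain rfl : d = fun n => b n ^ t := funext hd
  have hε : Tendsto (fun n => (b n ^ 2)⁻¹) atTop (𝓝[≠] 0) :=
    (tendsto_inv_atTop_nhdsGT_zero.comp ((tendsto_pow_atTop two_ne_zero).comp
      (tendsto_atTop_of_sq_mul_exp_sq hb))).mono_right (nhdsGT_le_nhdsNE 0)
  obtain ⟨C, hC, hbound⟩ := (IsBigO.comp_tendsto
    (hasQuadraticExpansion_normalizedDensity ht.ne' x) hε).exists_pos
  have hu : ∀ᶠ n in atTop, 0 < 1 + t * x * (b n ^ 2)⁻¹ :=
    (((hε.mono_right nhdsWithin_le_nhds).const_mul (t * x)).const_add 1).eventually_const_lt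
      (by simp)
  obtain ⟨N, hN⟩ := eventually_atTop.1 ((eventually_ge_atTop 1).and (hu.and hbound.bound))
  refine ⟨C, hC, N, fun n hn => ?_⟩
  obtain ⟨hn1, hun, hCn⟩ := hN n hn
  obtain ⟨hbn, hbn_eq⟩ := hb n hn1
  have hpos : 0 < t * b n ^ (t - 2) * x + b n ^ t := by
    rw [mul_rpow_sub_two_mul_add_rpow hbn]; positivity
  have hderiv : deriv (fun y => stdNormalCDF ((t * b n ^ (t - 2) * y + b n ^ t) ^ (1 / t))) x =
      t⁻¹ * (t * b n ^ (t - 2)) * (t * b n ^ (t - 2) * x + b n ^ t) ^ (1 / t - 1) *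
        stdNormalPDF ((t * b n ^ (t - 2) * x + b n ^ t) ^ (1 / t)) :=
    (hasDerivAt_stdNormalCDF_comp_rpow hpos).deriv.trans (by ring)
  refine ⟨hpos, hderiv, ?_⟩
  rw [hderiv, mul_exp_mul_density_eq_normalizedDensity ht.ne' hbn hun n.cast_nonneg hbn_eq]
  simp only [Function.comp_apply, norm_eq_abs] at hCn
  convert hCn using 2
  · ring
  · rw [abs_of_pos (by positivity)]; ring

/-- Lemma 3.3, `t ≠ 2`: With `b_n` the unique positive solution of
`2π b_n² exp(b_n²) = n²`, `c_n = t b_n^{t−2}` and `d_n = b_n^t` (for `t > 0`, `t ≠ 2`):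
`n (d/dx) Φ((c_n x + d_n)^{1/t}) = e^{−x}(1 + x b_n^{−2}(1 − t + ((t−2)/2)x)
  + x² b_n^{−4}((1−t)(1−2t)/2 + (5(1−t)(t−2)/6)x + ((t−2)²/8)x²) + O(b_n^{−6}))`,
the derivative being `t⁻¹ n c_n (c_n x + d_n)^{1/t − 1} φ((c_n x + d_n)^{1/t})`. -/
theorem powered_extremes_cdf_deriv_expansion_t_ne_two
    (b : ℕ → ℝ)
    (hb : ∀ n : ℕ, 1 ≤ n → 0 < b n ∧
      2 * Real.pi * (b n) ^ 2 * Real.exp ((b n) ^ 2) = (n : ℝ) ^ 2)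
    (t : ℝ) (ht : 0 < t) (ht2 : t ≠ 2) (x : ℝ)
    (c d : ℕ → ℝ)
    (hc : ∀ n : ℕ, c n = t * b n ^ (t - 2))
    (hd : ∀ n : ℕ, d n = b n ^ t) :
    ∃ C > (0 : ℝ), ∃ N : ℕ, ∀ n : ℕ, N ≤ n →
      0 < c n * x + d n ∧
      deriv (fun y : ℝ => stdNormalCDF ((c n * y + d n) ^ (1 / t))) x =
        t⁻¹ * c n * (c n * x + d n) ^ (1 / t - 1) *
          stdNormalPDF ((c n * x + d n) ^ (1 / t)) ∧
      |(n : ℝ) * Real.exp x *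
          deriv (fun y : ℝ => stdNormalCDF ((c n * y + d n) ^ (1 / t))) x -
        (1 + x / (b n) ^ 2 * (1 - t + (t - 2) / 2 * x) +
          x ^ 2 / (b n) ^ 4 *
            ((1 - t) * (1 - 2 * t) / 2 + 5 * (1 - t) * (t - 2) / 6 * x +
              (t - 2) ^ 2 / 8 * x ^ 2))|
      ≤ C / (b n) ^ 6 :=
  powered_extremes_cdf_deriv_expansion_t_ne_two_general b hb t ht x c d hc hd
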